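/- For a single variable: for any positive integers l₁, l₂, (x^{l₁}∂^{l₁} − (γL)^{l₁})(x^{l₂}∂^{l₂} − (γL)^{l₂}) applied to exp(γL(x−1)) and evaluated at x = 1 equals l₁ l₂ (γL)^{l₁+l₂−1} + O(L^{l₁+l₂−2}) as L → ∞ (γ > 0 fixed). In particular x^k ∂^k exp(γL(x−1))|_{x=1} = (γL)^k. -/

import Mathlib

open Filter

/-- The operator `x^l ∂^l − c^l` acting on smooth functions of one real variable. -/
noncomputable def factOp (l : ℕ) (c : ℝ) (f : ℝ → ℝ) : ℝ → ℝ :=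
  fun x => x ^ l * (deriv^[l] f) x - c ^ l * f x

/-! Since `∂^l e^{c(x-1)} = c^l e^{c(x-1)}`, the inner operator sends the exponential to
`c^{l₂} (x^{l₂} - 1) e^{c(x-1)}`, which vanishes at `x = 1`. By Leibniz' rule the outer operator
then gives `∑_{1 ≤ j ≤ l₁} C(l₁, j) l₂(l₂-1)⋯(l₂-j+1) c^{l₁+l₂-j}` at `x = 1`: the `j = 1` term is
`l₁ l₂ c^{l₁+l₂-1}`, and for `c = γL` the others are `O(L^{l₁+l₂-2})`. -/

open Finset Asymptotics

lemma iteratedDeriv_exp_mul_sub_one (c : ℝ) (n : ℕ) :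
    iteratedDeriv n (fun x => Real.exp (c * (x - 1))) =
      fun x => c ^ n * Real.exp (c * (x - 1)) := by
  rw [iteratedDeriv_comp_sub_const n (fun s => Real.exp (c * s)), iteratedDeriv_exp_const_mul]

lemma factOp_exp_mul_sub_one (l : ℕ) (c : ℝ) :
    factOp l c (fun x => Real.exp (c * (x - 1))) =
      fun x => c ^ l * (x ^ l * Real.exp (c * (x - 1)) - Real.exp (c * (x - 1))) := by
  funext x
  rw [factOp, ← iteratedDeriv_eq_iterate, iteratedDeriv_exp_mul_sub_one]
  ring

lemma iteratedDeriv_pow_mul_exp_mul_sub_one_at_one (m n : ℕ) (c : ℝ) :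
    iteratedDeriv n (fun x => x ^ m * Real.exp (c * (x - 1))) 1 =
      ∑ j ∈ range (n + 1), n.choose j * m.descFactorial j * c ^ (n - j) := by
  rw [iteratedDeriv_fun_mul (by fun_prop) (by fun_prop)]
  refine sum_congr rfl fun j _ => ?_
  simp [iteratedDeriv_exp_mul_sub_one]

lemma factOp_factOp_exp_mul_sub_one_at_one (l₁ l₂ : ℕ) (c : ℝ) :
    factOp l₁ c (factOp l₂ c fun x => Real.exp (c * (x - 1))) 1 =
      ∑ j ∈ Ico 1 (l₁ + 1), l₁.choose j * l₂.descFactorial j * c ^ (l₁ + l₂ - j) := by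
  have hderiv : iteratedDeriv l₁ (factOp l₂ c fun x => Real.exp (c * (x - 1))) 1 =
      c ^ l₂ *
        (∑ j ∈ range (l₁ + 1), l₁.choose j * l₂.descFactorial j * c ^ (l₁ - j) - c ^ l₁) := by
    rw [factOp_exp_mul_sub_one, iteratedDeriv_const_mul_field,
      iteratedDeriv_fun_sub (by fun_prop) (by fun_prop),
      iteratedDeriv_pow_mul_exp_mul_sub_one_at_one, iteratedDeriv_exp_mul_sub_one]
    simp
  rw [factOp, ← iteratedDeriv_eq_iterate, hderiv, factOp_exp_mul_sub_one, range_eq_Ico,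
    sum_eq_sum_Ico_succ_bot (Nat.succ_pos l₁)]
  simp only [one_pow, one_mul, sub_self, mul_zero, sub_zero, Nat.choose_zero_right,
    Nat.descFactorial_zero, Nat.cast_one, Nat.sub_zero, add_sub_cancel_left, zero_add, mul_sum]
  refine sum_congr rfl fun j hj => ?_
  rw [show l₁ + l₂ - j = l₂ + (l₁ - j) by have := (mem_Ico.1 hj).2; omega, pow_add]
  ring

lemma isBigO_const_mul_pow_atTop_of_le (a : ℝ) {p q : ℕ} (hpq : p ≤ q) :
    (fun L : ℝ => (a * L) ^ p) =O[atTop] fun L => L ^ q := by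
  simp_rw [mul_pow]
  exact ((isBigO_pow_pow_cobounded_of_le hpq).mono
    IsOrderBornology.atTop_le_cobounded).const_mul_left _

theorem statement13 (γ : ℝ) (l₁ l₂ : ℕ) (h₁ : 1 ≤ l₁) :
    (∀ L : ℝ, ∀ k : ℕ,
      (1 : ℝ) ^ k * (deriv^[k] fun x => Real.exp (γ * L * (x - 1))) 1 = (γ * L) ^ k) ∧
    (fun L : ℝ =>
        factOp l₁ (γ * L) (factOp l₂ (γ * L) fun x => Real.exp (γ * L * (x - 1))) 1 -
          (l₁ : ℝ) * l₂ * (γ * L) ^ (l₁ + l₂ - 1)) =O[atTop]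
      fun L : ℝ => L ^ (l₁ + l₂ - 2) := by
  refine ⟨fun L k => by simp [← iteratedDeriv_eq_iterate, iteratedDeriv_exp_mul_sub_one], ?_⟩
  have hexpand : ∀ L : ℝ,
      factOp l₁ (γ * L) (factOp l₂ (γ * L) fun x => Real.exp (γ * L * (x - 1))) 1 -
          (l₁ : ℝ) * l₂ * (γ * L) ^ (l₁ + l₂ - 1) =
        ∑ j ∈ Ico 2 (l₁ + 1), l₁.choose j * l₂.descFactorial j * (γ * L) ^ (l₁ + l₂ - j) := by
    intro L
    rw [factOp_factOp_exp_mul_sub_one_at_one, sum_eq_sum_Ico_succ_bot (by omega)]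
    simp
  simp_rw [hexpand]
  refine IsBigO.fun_sum fun j hj => ?_
  have hexp : l₁ + l₂ - j ≤ l₁ + l₂ - 2 := Nat.sub_le_sub_left (mem_Ico.1 hj).1 _
  exact (isBigO_const_mul_pow_atTop_of_le γ hexp).const_mul_left _
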